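/- Let f be an entropy generator and γ ∈ ℝ, and suppose that for all probability distributions P, Q on ℕ one has H_f(P⊗Q) = H_f(P) + H_f(Q) − γ·H_f(P)·H_f(Q). Then H_f is a Tsallis entropy: there exists q > 0 with q ≠ 1 such that f(x) = (x − x^q)/(1 − q) for all x ∈ [0,∞), and moreover γ = q − 1. -/

import Mathlib

/-!
Pair an arbitrary distribution `Q` with the fair coin. Pseudo-additivity becomes the functional
equation `∑ⱼ Φ (qⱼ) = 0` for `Φ y = 2 f (y/2) - (1 + 2γ f(1/2)) f y - 2 f(1/2) y`. On three-point
distributions this gives `Φ (2t) = 2 Φ t` and `Φ 1 = 0`; the first kills every Taylor coefficient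
of `Φ` at `0` but the linear one, and the second kills that one, so `Φ` vanishes near `0`. Hence
`f (y/2) = α f y + f(1/2) y` near `0`, and comparing Taylor coefficients leaves
`f y = a y + b yⁿ` for a single `n ≥ 2`; by the identity theorem this holds on `[0, ∞)`. The
normalisations `f 1 = 0`, `f' 1 = 1` give `b = 1/(n-1) = -a`, and the linear Taylor coefficient of
the functional equation gives `γ a = -1`, i.e. `γ = n - 1`.
-/

/-- A probability distribution on ℕ: nonnegative weights summing to 1. -/
def IsProbDist (p : ℕ → ℝ) : Prop := (∀ i, 0 ≤ p i) ∧ HasSum p 1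

/-- An entropy generator: real analytic on `[0,∞)`, strictly convex on `[0,∞)`,
with `f 0 = f 1 = 0` and `f' 1 = 1`. -/
def IsEntropyGenerator (f : ℝ → ℝ) : Prop :=
  (∀ x ∈ Set.Ici (0 : ℝ), AnalyticAt ℝ f x) ∧
  StrictConvexOn ℝ (Set.Ici (0 : ℝ)) f ∧
  f 0 = 0 ∧ f 1 = 0 ∧ deriv f 1 = 1

open Filter Set Topology FormalMultilinearSeries

section PowerSeries

lemma eq_zero_of_eventually_hasSum_zero {a : ℕ → ℝ}
    (h : ∀ᶠ y in 𝓝 (0 : ℝ), HasSum (fun n => a n * y ^ n) 0) : a = 0 := by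
  have hp : HasFPowerSeriesAt (0 : ℝ → ℝ) (ofScalars ℝ a) 0 :=
    hasFPowerSeriesAt_iff.2 <| h.mono fun y hy => by simpa [mul_comm] using hy
  exact (ofScalars_series_eq_zero ℝ).1 hp.eq_zero

variable {g : ℝ → ℝ} {p : FormalMultilinearSeries ℝ ℝ ℝ}

lemma HasFPowerSeriesAt.eventually_hasSum_coeff_mul_pow (hp : HasFPowerSeriesAt g p 0) :
    ∀ᶠ y in 𝓝 0, HasSum (fun n => p.coeff n * y ^ n) (g y) :=
  (hasFPowerSeriesAt_iff.1 hp).mono fun y hy => by simpa [mul_comm] using hy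

lemma HasFPowerSeriesAt.coeff_mul_pow_eq (hp : HasFPowerSeriesAt g p 0) {s α β : ℝ}
    (h : ∀ᶠ y in 𝓝 0, g (s * y) = α * g y + β * y) (n : ℕ) :
    p.coeff n * s ^ n = α * p.coeff n + if n = 1 then β else 0 := by
  have hs : Tendsto (s * ·) (𝓝 0) (𝓝 0) := by
    simpa using (continuous_const_mul s).tendsto 0
  have hsum := hp.eventually_hasSum_coeff_mul_pow
  have key := eq_zero_of_eventually_hasSum_zero
    (a := fun n => p.coeff n * s ^ n - α * p.coeff n - if n = 1 then β else 0) <| by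
    filter_upwards [hsum, hs.eventually hsum, h] with y hg hgs hrel
    have H := (hgs.sub (hg.mul_left α)).sub (hasSum_ite_eq 1 (β * y))
    rw [hrel, add_sub_cancel_left, sub_self] at H
    refine H.congr_fun fun m => ?_
    split_ifs with hm
    · subst hm; ring
    · ring
  have := congrFun key n
  simp only [Pi.zero_apply] at this
  linarith

lemma HasFPowerSeriesAt.eventually_eq_sum (hp : HasFPowerSeriesAt g p 0) {s : Finset ℕ}
    (h : ∀ n ∉ s, p.coeff n = 0) : ∀ᶠ y in 𝓝 0, g y = ∑ n ∈ s, p.coeff n * y ^ n :=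
  hp.eventually_hasSum_coeff_mul_pow.mono fun y hy =>
    hy.unique (hasSum_sum_of_ne_finset_zero fun n hn => by simp [h n hn])

/-- If `g (s y) = α g y + β y`, comparing coefficients gives `aₙ (sⁿ - α) = 0` for `n ≠ 1`,
and `s ↦ sⁿ` is injective, so at most one coefficient besides `a₁` survives. -/
lemma HasFPowerSeriesAt.exists_eventually_eq_linear_add_monomial (hp : HasFPowerSeriesAt g p 0)
    (h0 : g 0 = 0) {s α β : ℝ} (hs₀ : 0 < s) (hs₁ : s ≠ 1)
    (h : ∀ᶠ y in 𝓝 0, g (s * y) = α * g y + β * y) :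
    ∃ n, 2 ≤ n ∧ ∀ᶠ y in 𝓝 0, g y = p.coeff 1 * y + p.coeff n * y ^ n := by
  have hpow : ∀ n ≠ 1, p.coeff n ≠ 0 → s ^ n = α := fun n hn hpn => by
    have := hp.coeff_mul_pow_eq h n
    rw [if_neg hn, add_zero, mul_comm] at this
    exact mul_right_cancel₀ hpn this
  have hp0 : p.coeff 0 = 0 := by simpa [h0] using hp.coeff_zero 1
  obtain ⟨n, hn, hvanish⟩ : ∃ n, 2 ≤ n ∧ ∀ m, m ≠ 1 → m ≠ n → p.coeff m = 0 := by
    by_cases hex : ∃ n, 2 ≤ n ∧ p.coeff n ≠ 0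
    · obtain ⟨n, hn, hpn⟩ := hex
      refine ⟨n, hn, fun m hm1 hmn => ?_⟩
      by_contra hpm
      exact hmn (pow_right_injective₀ hs₀ hs₁
        ((hpow m hm1 hpm).trans (hpow n (by omega) hpn).symm))
    · push Not at hex
      refine ⟨2, le_rfl, fun m hm1 _ => ?_⟩
      rcases Nat.lt_or_ge m 2 with hm | hm
      · interval_cases m
        · exact hp0
        · exact absurd rfl hm1
      · exact hex m hm
  refine ⟨n, hn, (hp.eventually_eq_sum (s := {1, n}) fun m hm => ?_).mono fun y hy => ?_⟩
  · simp only [Finset.mem_insert, Finset.mem_singleton, not_or] at hm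
    exact hvanish m hm.1 hm.2
  · rwa [Finset.sum_pair (by omega), pow_one] at hy

end PowerSeries

lemma eventually_eq_zero_of_three_point {Φ : ℝ → ℝ} (hΦ : AnalyticOnNhd ℝ Φ (Ici 0))
    (h0 : Φ 0 = 0)
    (h : ∀ c d, 0 ≤ c → 0 ≤ d → c + d ≤ 1 → Φ c + Φ d + Φ (1 - c - d) = 0) :
    ∀ᶠ y in 𝓝 0, Φ y = 0 := by
  have hΦ₀ : AnalyticAt ℝ Φ 0 := hΦ 0 self_mem_Ici
  have hdouble : ∀ᶠ t in 𝓝 0, Φ (2 * t) = 2 * Φ t + 0 * t := by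
    have hright : ∀ᶠ t in 𝓝[>] 0, Φ (2 * t) = 2 * Φ t + 0 * t := by
      filter_upwards [Ioo_mem_nhdsGT (by norm_num : (0 : ℝ) < 1 / 2)] with t ⟨ht₀, ht₁⟩
      have hsplit := h (2 * t) (1 - 2 * t) (by linarith) (by linarith) (by linarith)
      have hpair := h t t ht₀.le ht₀.le (by linarith)
      rw [show 1 - 2 * t - (1 - 2 * t) = 0 by ring, h0] at hsplit
      rw [show 1 - t - t = 1 - 2 * t by ring] at hpair
      linarith
    refine ((hΦ₀.comp_of_eq (by fun_prop) (mul_zero 2)).frequently_eq_iff_eventually_eq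
      (by fun_prop)).1 (hright.frequently.filter_mono (nhdsGT_le_nhdsNE 0))
  obtain ⟨p, hp⟩ := hΦ₀
  have hlin : ∀ᶠ y in 𝓝 0, Φ y = p.coeff 1 * y := by
    refine (hp.eventually_eq_sum (s := {1}) fun n hn => ?_).mono fun y hy => by simpa using hy
    have hrel := hp.coeff_mul_pow_eq hdouble n
    rw [Finset.mem_singleton] at hn
    rw [if_neg hn, add_zero, mul_comm 2] at hrel
    by_contra hpn
    exact hn (pow_right_injective₀ (two_pos (α := ℝ)) (by norm_num)
      (by simpa using mul_left_cancel₀ hpn hrel))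
  have hEq : EqOn Φ (p.coeff 1 * ·) (Ici 0) :=
    hΦ.eqOn_of_preconnected_of_eventuallyEq (fun _ _ => by fun_prop) isPreconnected_Ici
      self_mem_Ici hlin
  have h1 : p.coeff 1 = 0 := by
    have hone := h 0 0 le_rfl le_rfl (by norm_num)
    rw [h0, sub_zero, sub_zero, hEq (mem_Ici.2 zero_le_one)] at hone
    linarith
  simpa [h1] using hlin

section Entropy

variable {f : ℝ → ℝ}

noncomputable def fEntropy (f : ℝ → ℝ) {ι : Type*} (p : ι → ℝ) : ℝ := -∑' i, f (p i)

def IsPseudoAdditive (f : ℝ → ℝ) (γ : ℝ) : Prop :=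
  ∀ p q : ℕ → ℝ, IsProbDist p → IsProbDist q →
    fEntropy f (fun ij : ℕ × ℕ => p ij.1 * q ij.2) =
      fEntropy f p + fEntropy f q - γ * fEntropy f p * fEntropy f q

def finDist {n : ℕ} (v : Fin n → ℝ) : ℕ → ℝ := fun i => if h : i < n then v ⟨i, h⟩ else 0

lemma finDist_eq_zero {n : ℕ} (v : Fin n → ℝ) {i : ℕ} (hi : i ∉ Finset.range n) :
    finDist v i = 0 :=
  dif_neg (by simpa using hi)

lemma sum_range_finDist {n : ℕ} (v : Fin n → ℝ) (g : ℝ → ℝ) :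
    ∑ i ∈ Finset.range n, g (finDist v i) = ∑ i, g (v i) := by
  rw [Finset.sum_range]
  exact Finset.sum_congr rfl fun i _ => by simp [finDist]

lemma isProbDist_finDist {n : ℕ} {v : Fin n → ℝ} (hv : ∀ i, 0 ≤ v i) (hsum : ∑ i, v i = 1) :
    IsProbDist (finDist v) := by
  refine ⟨fun i => ?_, ?_⟩
  · unfold finDist
    split_ifs
    exacts [hv _, le_rfl]
  · have : HasSum (finDist v) _ := hasSum_sum_of_ne_finset_zero fun i hi => finDist_eq_zero v hi
    rwa [sum_range_finDist v fun x => x, hsum] at this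

lemma fEntropy_finDist (hf0 : f 0 = 0) {n : ℕ} (v : Fin n → ℝ) :
    fEntropy f (finDist v) = -∑ i, f (v i) := by
  rw [fEntropy, tsum_eq_sum fun i hi => by rw [finDist_eq_zero v hi, hf0], sum_range_finDist]

lemma fEntropy_finDist_mul_finDist (hf0 : f 0 = 0) {m n : ℕ} (v : Fin m → ℝ) (w : Fin n → ℝ) :
    fEntropy f (fun ij : ℕ × ℕ => finDist v ij.1 * finDist w ij.2) =
      -∑ i, ∑ j, f (v i * w j) := by
  rw [fEntropy, tsum_eq_sum (s := Finset.range m ×ˢ Finset.range n) fun ij hij => ?_,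
    Finset.sum_product, ← sum_range_finDist v fun x => ∑ j, f (x * w j)]
  · exact congrArg Neg.neg <| Finset.sum_congr rfl fun i _ =>
      sum_range_finDist w fun y => f (finDist v i * y)
  · rcases not_and_or.1 (Finset.mem_product.not.1 hij) with hi | hj
    · rw [finDist_eq_zero v hi, zero_mul, hf0]
    · rw [finDist_eq_zero w hj, mul_zero, hf0]

/-- Pairing a distribution `Q` with the fair coin `(1/2, 1/2)`, pseudo-additivity says that the
values of `halvingDefect f γ` at the atoms of `Q` sum to zero. -/
noncomputable def halvingDefect (f : ℝ → ℝ) (γ y : ℝ) : ℝ :=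
  2 * f (2⁻¹ * y) - (1 + 2 * γ * f 2⁻¹) * f y - 2 * f 2⁻¹ * y

lemma IsPseudoAdditive.halvingDefect_three_point {γ : ℝ} (h : IsPseudoAdditive f γ)
    (hf0 : f 0 = 0) {c d : ℝ} (hc : 0 ≤ c) (hd : 0 ≤ d) (hcd : c + d ≤ 1) :
    halvingDefect f γ c + halvingDefect f γ d + halvingDefect f γ (1 - c - d) = 0 := by
  have hcoin := isProbDist_finDist (v := ![2⁻¹, 2⁻¹]) (by simp [Fin.forall_fin_two])
    (by norm_num [Fin.sum_univ_two])
  have hQ := isProbDist_finDist (v := ![c, d, 1 - c - d])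
    (by simp [Fin.forall_fin_succ, hc, hd]; linarith) (by simp [Fin.sum_univ_three])
  have := h _ _ hcoin hQ
  rw [fEntropy_finDist_mul_finDist hf0, fEntropy_finDist hf0, fEntropy_finDist hf0] at this
  simp only [Fin.sum_univ_two, Fin.sum_univ_three, Matrix.cons_val] at this
  unfold halvingDefect
  linear_combination -this

lemma analyticOnNhd_halvingDefect (hf : AnalyticOnNhd ℝ f (Ici 0)) (γ : ℝ) :
    AnalyticOnNhd ℝ (halvingDefect f γ) (Ici 0) := fun x hx => by
  have hhalf : AnalyticAt ℝ (fun y => f (2⁻¹ * y)) x :=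
    (hf (2⁻¹ * x) (mul_nonneg (by norm_num : (0 : ℝ) ≤ 2⁻¹) hx)).comp (by fun_prop)
  exact ((analyticAt_const.mul hhalf).sub (analyticAt_const.mul (hf x hx))).sub
    (analyticAt_const.mul analyticAt_id)

lemma IsPseudoAdditive.eventually_apply_half_mul {γ : ℝ} (h : IsPseudoAdditive f γ)
    (hf : AnalyticOnNhd ℝ f (Ici 0)) (hf0 : f 0 = 0) :
    ∀ᶠ y in 𝓝 0, f (2⁻¹ * y) = (1 + 2 * γ * f 2⁻¹) / 2 * f y + f 2⁻¹ * y := by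
  refine (eventually_eq_zero_of_three_point (analyticOnNhd_halvingDefect hf γ)
    (by simp [halvingDefect, hf0]) fun _ _ hc hd hcd =>
      h.halvingDefect_three_point hf0 hc hd hcd).mono fun y hy => ?_
  unfold halvingDefect at hy
  linarith

lemma IsEntropyGenerator.apply_half_neg (hf : IsEntropyGenerator f) : f 2⁻¹ < 0 := by
  obtain ⟨-, hconv, hf0, hf1, -⟩ := hf
  have := hconv.2 self_mem_Ici (mem_Ici.2 zero_le_one) zero_ne_one
    (by norm_num : (0 : ℝ) < 2⁻¹) (by norm_num : (0 : ℝ) < 2⁻¹) (by norm_num)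
  simpa [hf0, hf1] using this

lemma coeffs_of_eqOn_linear_add_monomial {a b : ℝ} {n : ℕ} (hf1 : f 1 = 0)
    (hf'1 : deriv f 1 = 1) (hEq : EqOn f (fun x => a * x + b * x ^ n) (Ici 0)) :
    a + b = 0 ∧ a + n * b = 1 := by
  have hderiv : HasDerivAt (fun x => a * x + b * x ^ n) (a + n * b) 1 :=
    (((hasDerivAt_id (1 : ℝ)).const_mul a).add ((hasDerivAt_pow n 1).const_mul b)).congr_deriv
      (by simp [mul_comm])
  have hnhds : f =ᶠ[𝓝 1] fun x => a * x + b * x ^ n :=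
    eventually_of_mem (Ici_mem_nhds zero_lt_one) hEq
  constructor
  · simpa [hf1] using (hEq (mem_Ici.2 zero_le_one)).symm
  · rw [← hf'1, hnhds.deriv_eq, hderiv.deriv]

end Entropy

theorem stmt5 (f : ℝ → ℝ) (hf : IsEntropyGenerator f) (γ : ℝ)
    (h : ∀ p q : ℕ → ℝ, IsProbDist p → IsProbDist q →
      (-∑' ij : ℕ × ℕ, f (p ij.1 * q ij.2)) =
        (-∑' i, f (p i)) + (-∑' j, f (q j))
          - γ * (-∑' i, f (p i)) * (-∑' j, f (q j))) :
    ∃ q : ℝ, 0 < q ∧ q ≠ 1 ∧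
      (∀ x : ℝ, 0 ≤ x → f x = (x - x ^ q) / (1 - q)) ∧ γ = q - 1 := by
  have hτ := hf.apply_half_neg
  obtain ⟨hAn, -, hf0, hf1, hf'1⟩ := hf
  have hrel := IsPseudoAdditive.eventually_apply_half_mul h hAn hf0
  obtain ⟨p, hp⟩ := hAn 0 self_mem_Ici
  have hγ : γ * p.coeff 1 = -1 := by
    have hrel₁ := hp.coeff_mul_pow_eq hrel 1
    simp only [pow_one, if_true] at hrel₁
    have : f 2⁻¹ * (γ * p.coeff 1 + 1) = 0 := by linear_combination -hrel₁
    linarith [(mul_eq_zero.1 this).resolve_left hτ.ne]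
  obtain ⟨n, hn, hpoly⟩ :=
    hp.exists_eventually_eq_linear_add_monomial hf0 (by norm_num) (by norm_num) hrel
  have hEq : EqOn f (fun x => p.coeff 1 * x + p.coeff n * x ^ n) (Ici 0) :=
    AnalyticOnNhd.eqOn_of_preconnected_of_eventuallyEq hAn (fun _ _ => by fun_prop)
      isPreconnected_Ici self_mem_Ici hpoly
  obtain ⟨hsum, hderiv⟩ := coeffs_of_eqOn_linear_add_monomial hf1 hf'1 hEq
  have hn' : (2 : ℝ) ≤ n := by exact_mod_cast hn
  refine ⟨n, by linarith, by linarith, fun x hx => ?_, ?_⟩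
  · rw [hEq hx, Real.rpow_natCast, eq_div_iff (by linarith)]
    linear_combination x * (1 - n) * hsum + (x - x ^ n) * (hderiv - hsum)
  · linear_combination (-γ) * (hderiv - hsum) + (n - 1) * (γ * hsum - hγ)
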